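/- arXiv:2601.09412 — 2 statements merged into one kernel-verified Lean document; each statement's English description precedes it below -/
import Mathlib

section
/- Let m, n ≥ 1, R > 0, and let σ : ℝ^{mn} → ℝ be a radial function supported in the ball B(0,R), such that the function σ̃ defined on [-1/2,1/2] by σ̃(±|ξ|²) = σ(√(2m) R ξ) has an absolutely convergent Fourier series converging to σ̃ pointwise. Then for every ξ₁,…,ξ_m ∈ ℝⁿ with (ξ₁,…,ξ_m) in the support region, σ(ξ₁,…,ξ_m) = ∑_{k∈ℤ} c_k ∏_{j=1}^m σ^k(ξ_j), where c_k are the Fourier coefficients of σ̃ and σ^k(η) = e^{(π/m) k i |η/R|²} φ(η/R), with φ a fixed smooth cutoff equal to 1 on the unit ball of ℝⁿ and vanishing for |η| > √m. -/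
open MeasureTheory Complex Real
open scoped FourierTransform ENNReal

/-- Glue an `m`-tuple of vectors of `ℝⁿ` into a single vector of `ℝ^{mn}`. -/
noncomputable def glueTuple (m n : ℕ) (ξ : Fin m → EuclideanSpace ℝ (Fin n)) :
    EuclideanSpace ℝ (Fin m × Fin n) :=
  (EuclideanSpace.equiv (Fin m × Fin n) ℝ).symm (fun p => ξ p.1 p.2)

theorem stmt4 (m n : ℕ) (hm : 1 ≤ m) (hn : 1 ≤ n) (R : ℝ) (hR : 0 < R)
    (σ : EuclideanSpace ℝ (Fin m × Fin n) → ℝ)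
    (hrad : ∃ F : ℝ → ℝ, ∀ ζ, σ ζ = F ‖ζ‖)
    (hsupp : ∀ ζ, R < ‖ζ‖ → σ ζ = 0)
    (σt : ℝ → ℝ)
    (hσt : ∀ ζ : EuclideanSpace ℝ (Fin m × Fin n),
      σt (‖ζ‖ ^ 2) = σ ((Real.sqrt (2 * m) * R) • ζ) ∧
      σt (-(‖ζ‖ ^ 2)) = σ ((Real.sqrt (2 * m) * R) • ζ))
    (c : ℤ → ℂ)
    (hc : ∀ k : ℤ, c k = ∫ x in Set.Icc (-(1/2) : ℝ) (1/2),
      (σt x : ℂ) * Complex.exp (-(2 * π * k * x) * Complex.I))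
    (habs : Summable fun k : ℤ => ‖c k‖)
    (hconv : ∀ x ∈ Set.Icc (-(1/2) : ℝ) (1/2),
      (∑' k : ℤ, c k * Complex.exp (2 * π * k * x * Complex.I)) = (σt x : ℂ))
    (φ : EuclideanSpace ℝ (Fin n) → ℝ)
    (hφsm : ContDiff ℝ (⊤ : ℕ∞) φ)
    (hφ1 : ∀ η : EuclideanSpace ℝ (Fin n), ‖η‖ ≤ 1 → φ η = 1)
    (hφ0 : ∀ η : EuclideanSpace ℝ (Fin n), Real.sqrt m < ‖η‖ → φ η = 0) :
    ∀ ξ : Fin m → EuclideanSpace ℝ (Fin n), ‖glueTuple m n ξ‖ ≤ R →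
      (σ (glueTuple m n ξ) : ℂ) =
        ∑' k : ℤ, c k * ∏ j : Fin m,
          (Complex.exp ((π / m * k * ‖R⁻¹ • ξ j‖ ^ 2 : ℝ) * Complex.I) *
            (φ (R⁻¹ • ξ j) : ℂ)) := by

  intro ξ hξ
  have hm0 : (0:ℝ) < (m:ℝ) := by exact_mod_cast hm
  have hR0 : R ≠ 0 := ne_of_gt hR
  set v := glueTuple m n ξ with hv
  -- squared norm of the glued vector
  have hglue_sq : ‖v‖ ^ 2 = ∑ j : Fin m, ‖ξ j‖ ^ 2 := by
    have h1 : ‖v‖ ^ 2 = ∑ p : Fin m × Fin n, (ξ p.1 p.2) ^ 2 := by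
      rw [EuclideanSpace.norm_eq, Real.sq_sqrt (by positivity)]
      congr 1
      ext p
      simp [hv, glueTuple, sq_abs]
    have h2 : ∀ j : Fin m, ‖ξ j‖ ^ 2 = ∑ i : Fin n, (ξ j i) ^ 2 := by
      intro j
      rw [EuclideanSpace.norm_eq, Real.sq_sqrt (by positivity)]
      congr 1
      ext i
      simp [sq_abs]
    rw [h1, Fintype.sum_prod_type]
    exact Finset.sum_congr rfl fun j _ => (h2 j).symm
  -- each ξ j has norm ≤ R
  have hξj : ∀ j : Fin m, ‖ξ j‖ ≤ R := by
    intro j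
    have h1 : ‖ξ j‖ ^ 2 ≤ ∑ j : Fin m, ‖ξ j‖ ^ 2 :=
      Finset.single_le_sum (f := fun j => ‖ξ j‖ ^ 2) (fun i _ => by positivity) (Finset.mem_univ j)
    have h2 : ‖v‖ ^ 2 ≤ R ^ 2 := by
      apply pow_le_pow_left₀ (norm_nonneg v) hξ
    nlinarith [norm_nonneg (ξ j)]
  have hsqrtpos : (0:ℝ) < Real.sqrt (2 * m) := Real.sqrt_pos.mpr (by positivity)
  set ζ : EuclideanSpace ℝ (Fin m × Fin n) := (Real.sqrt (2 * m) * R)⁻¹ • v with hζ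
  have hscale : (Real.sqrt (2 * (m:ℝ)) * R) • ζ = v := by
    rw [hζ, smul_smul, mul_inv_cancel₀ (by positivity), one_smul]
  set x := ‖ζ‖ ^ 2 with hxdef
  have hxval : x = ‖v‖ ^ 2 / (2 * m * R ^ 2) := by
    rw [hxdef, hζ, norm_smul, Real.norm_eq_abs,
      abs_of_pos (by positivity), mul_pow, inv_pow, mul_pow,
      Real.sq_sqrt (by positivity)]
    field_simp
  have hx1 : (σt x : ℝ) = σ v := by
    have := (hσt ζ).1
    rw [hscale] at this
    exact this
  have hxmem : x ∈ Set.Icc (-(1/2) : ℝ) (1/2) := by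
    constructor
    · have : (0:ℝ) ≤ x := by rw [hxdef]; positivity
      linarith
    · rw [hxval]
      have h2 : ‖v‖ ^ 2 ≤ R ^ 2 := by apply pow_le_pow_left₀ (norm_nonneg v) hξ
      rw [div_le_iff₀ (by positivity)]
      have hm1 : (1:ℝ) ≤ (m:ℝ) := by exact_mod_cast hm
      nlinarith
  -- per-term product identity
  have hprod : ∀ k : ℤ, (∏ j : Fin m,
      (Complex.exp ((π / m * k * ‖R⁻¹ • ξ j‖ ^ 2 : ℝ) * Complex.I) *
        (φ (R⁻¹ • ξ j) : ℂ))) = Complex.exp (2 * π * k * x * Complex.I) := by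
    intro k
    have hφval : ∀ j : Fin m, φ (R⁻¹ • ξ j) = 1 := by
      intro j
      apply hφ1
      rw [norm_smul, Real.norm_eq_abs, abs_of_pos (by positivity)]
      rw [inv_mul_le_iff₀ hR, mul_one]
      exact hξj j
    have h1 : (∏ j : Fin m,
        (Complex.exp ((π / m * k * ‖R⁻¹ • ξ j‖ ^ 2 : ℝ) * Complex.I) *
          (φ (R⁻¹ • ξ j) : ℂ))) =
        Complex.exp (∑ j : Fin m, ((π / m * k * ‖R⁻¹ • ξ j‖ ^ 2 : ℝ) : ℂ) * Complex.I) := by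
      rw [Complex.exp_sum]
      exact Finset.prod_congr rfl fun j _ => by rw [hφval j]; push_cast; ring
    rw [h1]
    congr 1
    rw [← Finset.sum_mul]
    have hsum : (∑ j : Fin m, ((π / m * k * ‖R⁻¹ • ξ j‖ ^ 2 : ℝ) : ℂ)) =
        ((2 * π * k * x : ℝ) : ℂ) := by
      rw [← Complex.ofReal_sum]
      congr 1
      have hnrm : ∀ j : Fin m, ‖R⁻¹ • ξ j‖ ^ 2 = R⁻¹ ^ 2 * ‖ξ j‖ ^ 2 := by
        intro j
        rw [norm_smul, Real.norm_eq_abs, abs_of_pos (by positivity), mul_pow]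
      calc (∑ j : Fin m, π / m * k * ‖R⁻¹ • ξ j‖ ^ 2)
          = π / m * k * R⁻¹ ^ 2 * ∑ j : Fin m, ‖ξ j‖ ^ 2 := by
            rw [Finset.mul_sum]
            exact Finset.sum_congr rfl fun j _ => by rw [hnrm j]; ring
        _ = 2 * π * k * x := by
            rw [← hglue_sq, hxval]
            field_simp
    rw [hsum]
    push_cast
    ring
  calc (σ v : ℂ) = ((σt x : ℝ) : ℂ) := by rw [hx1]
    _ = ∑' k : ℤ, c k * Complex.exp (2 * π * k * x * Complex.I) := (hconv x hxmem).symm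
    _ = _ := tsum_congr fun k => by rw [hprod k]
end

section
/- Let γ > 1. Define σ̃(x) for x ∈ [0,1] by σ̃(x) = (1 − log(1−x))^{-γ} for 0 ≤ x < 1 and σ̃(1) = 0. Then the cosine Fourier coefficients c_k = ∫₀¹ σ̃(x) cos((π/2) k x) dx satisfy |c_k| ≤ C k^{-1} (log k)^{-γ} for all k ≥ 2, for some constant C. -/
/-!
Write `σ(x) = L(x)^(-γ)` with `L(x) = 1 - log (1 - x)`, put `ω = π k / 2`, and split `[0, 1]` at
`b = 1 - 1/k`, where `L(b) = 1 + log k`. On `[b, 1]` the decreasing function `σ̃` is at most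
`σ(b) ≤ (log k)^(-γ)`, on an interval of length `1/k`. On `[0, b]` integrate by parts twice: the
boundary terms are `σ(b)/ω` and `(|σ'(0)| + |σ'(b)|)/ω²` with `|σ'(b)| = γ k L(b)^(-γ-1)`, and the
remainder is at most `ω⁻² ∫₀ᵇ |σ''|`. As `σ''` is positive only where `L < γ + 1`, and bounded by
`γ² e^(2γ)` there, this integral is at most `|σ'(b)| - |σ'(0)| + O(1)`. The resulting `O(k⁻²)`
terms are absorbed because `(log k)^γ ≤ γ^γ k`.
-/

open MeasureTheory Real

section CosineIntegral

variable {u u' u'' : ℝ → ℝ} {b ω : ℝ}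

theorem integral_mul_cos_eq (hω : ω ≠ 0) (hu : ∀ x ∈ Set.uIcc 0 b, HasDerivAt u (u' x) x)
    (hu' : ∀ x ∈ Set.uIcc 0 b, HasDerivAt u' (u'' x) x)
    (hu'' : IntervalIntegrable u'' volume 0 b) :
    ∫ x in 0..b, u x * cos (ω * x) =
      u b * sin (ω * b) / ω + (u' b * cos (ω * b) - u' 0) / ω ^ 2 -
        (∫ x in 0..b, u'' x * cos (ω * x)) / ω ^ 2 := by
  have hsin : ∀ x, HasDerivAt (fun y => sin (ω * y) / ω) (cos (ω * x)) x := fun x => by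
    refine (((hasDerivAt_id' x).const_mul ω).sin.div_const ω).congr_deriv ?_
    field_simp
  have hcos : ∀ x, HasDerivAt (fun y => -cos (ω * y) / ω ^ 2) (sin (ω * x) / ω) x := fun x => by
    refine (((hasDerivAt_id' x).const_mul ω).cos.neg.div_const (ω ^ 2)).congr_deriv ?_
    field_simp
  have hu'_int : IntervalIntegrable u' volume 0 b :=
    ContinuousOn.intervalIntegrable fun x hx => (hu' x hx).continuousAt.continuousWithinAt
  have hcont : Continuous fun x => cos (ω * x) := by fun_prop
  rw [intervalIntegral.integral_mul_deriv_eq_deriv_mul hu (fun x _ => hsin x) hu'_int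
      (hcont.intervalIntegrable _ _),
    intervalIntegral.integral_mul_deriv_eq_deriv_mul hu' (fun x _ => hcos x) hu''
      ((by fun_prop : Continuous fun x => sin (ω * x) / ω).intervalIntegrable _ _)]
  simp only [mul_div_assoc', mul_neg, neg_div, intervalIntegral.integral_neg,
    intervalIntegral.integral_div, mul_zero, sin_zero, cos_zero, zero_div]
  ring

theorem abs_integral_mul_cos_le (hb : 0 ≤ b) (hω : 0 < ω)
    (hu : ∀ x ∈ Set.uIcc 0 b, HasDerivAt u (u' x) x)
    (hu' : ∀ x ∈ Set.uIcc 0 b, HasDerivAt u' (u'' x) x)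
    (hu'' : IntervalIntegrable u'' volume 0 b) :
    |∫ x in 0..b, u x * cos (ω * x)| ≤
      |u b| / ω + (|u' 0| + |u' b| + ∫ x in 0..b, |u'' x|) / ω ^ 2 := by
  have hrem : |∫ x in 0..b, u'' x * cos (ω * x)| ≤ ∫ x in 0..b, |u'' x| := by
    refine (intervalIntegral.abs_integral_le_integral_abs hb).trans
      (intervalIntegral.integral_mono_on hb ?_ hu''.abs fun x _ => ?_)
    · exact (hu''.mul_continuousOn (by fun_prop)).abs
    · rw [abs_mul]
      exact mul_le_of_le_one_right (abs_nonneg _) (abs_cos_le_one _)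
  have hsin : |u b * sin (ω * b)| ≤ |u b| := by
    rw [abs_mul]; exact mul_le_of_le_one_right (abs_nonneg _) (abs_sin_le_one _)
  have hcos : |u' b * cos (ω * b)| ≤ |u' b| := by
    rw [abs_mul]; exact mul_le_of_le_one_right (abs_nonneg _) (abs_cos_le_one _)
  have hdiv : ∀ {p q c : ℝ}, 0 < c → |p| ≤ q → |p / c| ≤ q / c := fun hc h => by
    rw [abs_div, abs_of_pos hc]; exact div_le_div_of_nonneg_right h hc.le
  have h1 := abs_le.mp (hdiv hω hsin)
  have h2 := abs_le.mp (hdiv (pow_pos hω 2) hcos)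
  have h3 := abs_le.mp (hdiv (pow_pos hω 2) (le_refl |u' 0|))
  have h4 := abs_le.mp (hdiv (pow_pos hω 2) hrem)
  rw [integral_mul_cos_eq hω.ne' hu hu' hu'', sub_div, add_div, add_div, abs_le]
  constructor <;> linarith

end CosineIntegral

namespace LogDecay

noncomputable section

def logWeight (x : ℝ) : ℝ := 1 - log (1 - x)

def sigma (γ x : ℝ) : ℝ := logWeight x ^ (-γ)

def sigmaDeriv (γ x : ℝ) : ℝ := -γ * (1 - x)⁻¹ * logWeight x ^ (-γ - 1)

def sigmaDeriv2 (γ x : ℝ) : ℝ :=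
  γ * (1 - x)⁻¹ ^ 2 * logWeight x ^ (-γ - 2) * (γ + 1 - logWeight x)

def sigmaTilde (γ x : ℝ) : ℝ := if x < 1 then sigma γ x else 0

variable {γ x y : ℝ}

theorem one_le_logWeight (hx₀ : 0 ≤ x) (hx₁ : x < 1) : 1 ≤ logWeight x := by
  have : log (1 - x) ≤ 0 := log_nonpos (by linarith) (by linarith)
  rw [logWeight]; linarith

theorem logWeight_le_logWeight (hxy : x ≤ y) (hy : y < 1) : logWeight x ≤ logWeight y := by
  have := log_le_log (by linarith : 0 < 1 - y) (by linarith : 1 - y ≤ 1 - x)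
  rw [logWeight, logWeight]; linarith

theorem logWeight_one_sub_inv (K : ℝ) : logWeight (1 - K⁻¹) = 1 + log K := by
  rw [logWeight, sub_sub_cancel, log_inv]; ring

theorem hasDerivAt_logWeight (hx : x < 1) : HasDerivAt logWeight (1 - x)⁻¹ x := by
  have h := ((hasDerivAt_id' x).const_sub 1).log (by linarith : 1 - x ≠ 0)
  refine (h.const_sub 1).congr_deriv ?_
  field_simp

theorem hasDerivAt_logWeight_rpow (p : ℝ) (hx₀ : 0 ≤ x) (hx₁ : x < 1) :
    HasDerivAt (fun y => logWeight y ^ p) ((1 - x)⁻¹ * p * logWeight x ^ (p - 1)) x :=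
  (hasDerivAt_logWeight hx₁).rpow_const (Or.inl (by linarith [one_le_logWeight hx₀ hx₁]))

theorem hasDerivAt_sigma (hx₀ : 0 ≤ x) (hx₁ : x < 1) :
    HasDerivAt (sigma γ) (sigmaDeriv γ x) x := by
  refine (hasDerivAt_logWeight_rpow (-γ) hx₀ hx₁).congr_deriv ?_
  rw [sigmaDeriv]
  ring

theorem hasDerivAt_sigmaDeriv (hx₀ : 0 ≤ x) (hx₁ : x < 1) :
    HasDerivAt (sigmaDeriv γ) (sigmaDeriv2 γ x) x := by
  have hL : logWeight x ≠ 0 := by linarith [one_le_logWeight hx₀ hx₁]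
  have hinv : HasDerivAt (fun y => (1 - y)⁻¹) ((1 - x)⁻¹ ^ 2) x := by
    refine ((hasDerivAt_id' x).const_sub 1).inv (by linarith) |>.congr_deriv ?_
    rw [inv_pow]; ring
  refine ((hinv.const_mul (-γ)).mul (hasDerivAt_logWeight_rpow (-γ - 1) hx₀ hx₁)).congr_deriv ?_
  rw [sigmaDeriv2, show -γ - 1 - 1 = -γ - 2 by ring, show -γ - 1 = -γ - 2 + 1 by ring,
    rpow_add_one hL]
  ring

theorem continuousOn_logWeight : ContinuousOn logWeight (Set.Iio 1) := fun _ hx =>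
  (hasDerivAt_logWeight hx).continuousAt.continuousWithinAt

theorem continuousOn_sigmaDeriv2 {b : ℝ} (hb : b < 1) :
    ContinuousOn (sigmaDeriv2 γ) (Set.Icc 0 b) := by
  have hL : ContinuousOn logWeight (Set.Icc 0 b) :=
    continuousOn_logWeight.mono fun x hx => lt_of_le_of_lt hx.2 hb
  have hinv : ContinuousOn (fun x : ℝ => (1 - x)⁻¹) (Set.Icc 0 b) :=
    (continuousOn_const.sub continuousOn_id).inv₀ fun x hx => by
      simp only [Pi.sub_apply, id]; linarith [hx.2]
  have hpow : ContinuousOn (fun x => logWeight x ^ (-γ - 2)) (Set.Icc 0 b) :=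
    hL.rpow_const fun x hx => Or.inl (by linarith [one_le_logWeight hx.1 (lt_of_le_of_lt hx.2 hb)])
  exact ((continuousOn_const.mul (hinv.pow 2)).mul hpow).mul (continuousOn_const.sub hL)

theorem sigmaDeriv2_le (hγ : 0 ≤ γ) (hx₀ : 0 ≤ x) (hx₁ : x < 1) :
    sigmaDeriv2 γ x ≤ γ ^ 2 * exp γ ^ 2 := by
  have hL := one_le_logWeight hx₀ hx₁
  rcases le_or_gt (γ + 1) (logWeight x) with hbig | hsmall
  · refine le_trans ?_ (by positivity)
    exact mul_nonpos_of_nonneg_of_nonpos (by positivity) (by linarith)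
  · have hexp : (1 - x)⁻¹ ≤ exp γ := by
      refine ((log_lt_iff_lt_exp (inv_pos.mpr (by linarith))).mp ?_).le
      rw [log_inv]; rw [logWeight] at hsmall; linarith
    have hpow1 : logWeight x ^ (-γ - 2) ≤ 1 := rpow_le_one_of_one_le_of_nonpos hL (by linarith)
    calc sigmaDeriv2 γ x ≤ γ * exp γ ^ 2 * 1 * γ := by
          unfold sigmaDeriv2
          gcongr
          linarith
      _ = γ ^ 2 * exp γ ^ 2 := by ring

theorem integral_abs_sigmaDeriv2_le (hγ : 0 ≤ γ) {b : ℝ} (hb₀ : 0 ≤ b) (hb₁ : b < 1) :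
    ∫ x in 0..b, |sigmaDeriv2 γ x| ≤
      sigmaDeriv γ 0 - sigmaDeriv γ b + 2 * (γ ^ 2 * exp γ ^ 2) * b := by
  have hint : IntervalIntegrable (sigmaDeriv2 γ) volume 0 b :=
    (continuousOn_sigmaDeriv2 hb₁).intervalIntegrable_of_Icc hb₀
  have hftc : ∫ x in 0..b, sigmaDeriv2 γ x = sigmaDeriv γ b - sigmaDeriv γ 0 :=
    intervalIntegral.integral_eq_sub_of_hasDerivAt (fun x hx => by
      rw [Set.uIcc_of_le hb₀] at hx
      exact hasDerivAt_sigmaDeriv hx.1 (lt_of_le_of_lt hx.2 hb₁)) hint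
  calc ∫ x in 0..b, |sigmaDeriv2 γ x|
        ≤ ∫ x in 0..b, (2 * (γ ^ 2 * exp γ ^ 2) - sigmaDeriv2 γ x) := by
        refine intervalIntegral.integral_mono_on hb₀ hint.abs
          (intervalIntegrable_const.sub hint) fun x hx => ?_
        have := sigmaDeriv2_le hγ hx.1 (lt_of_le_of_lt hx.2 hb₁)
        rw [abs_le]; constructor <;> nlinarith [exp_pos γ]
    _ = sigmaDeriv γ 0 - sigmaDeriv γ b + 2 * (γ ^ 2 * exp γ ^ 2) * b := by
        rw [intervalIntegral.integral_sub intervalIntegrable_const hint, hftc,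
          intervalIntegral.integral_const, smul_eq_mul]
        ring

theorem sigma_nonneg (γ : ℝ) (hx₀ : 0 ≤ x) (hx₁ : x < 1) : 0 ≤ sigma γ x :=
  rpow_nonneg (by linarith [one_le_logWeight hx₀ hx₁]) _

theorem sigmaDeriv_nonpos (hγ : 0 ≤ γ) (hx₀ : 0 ≤ x) (hx₁ : x < 1) : sigmaDeriv γ x ≤ 0 := by
  have hinv : 0 ≤ (1 - x)⁻¹ := inv_nonneg.mpr (by linarith)
  have hpow := rpow_nonneg (by linarith [one_le_logWeight hx₀ hx₁] : 0 ≤ logWeight x) (-γ - 1)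
  exact mul_nonpos_of_nonpos_of_nonneg (mul_nonpos_of_nonpos_of_nonneg (by linarith) hinv) hpow

theorem sigmaDeriv_zero (γ : ℝ) : sigmaDeriv γ 0 = -γ := by
  simp [sigmaDeriv, logWeight]

theorem abs_integral_sigma_mul_cos_le (hγ : 0 ≤ γ) {b ω : ℝ} (hb₀ : 0 ≤ b) (hb₁ : b < 1)
    (hω : 0 < ω) :
    |∫ x in 0..b, sigma γ x * cos (ω * x)| ≤
      sigma γ b / ω + 2 * (-sigmaDeriv γ b + γ ^ 2 * exp γ ^ 2) / ω ^ 2 := by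
  have hmem : ∀ x ∈ Set.uIcc 0 b, 0 ≤ x ∧ x < 1 := fun x hx => by
    rw [Set.uIcc_of_le hb₀] at hx; exact ⟨hx.1, lt_of_le_of_lt hx.2 hb₁⟩
  have hbound := abs_integral_mul_cos_le hb₀ hω
    (fun x hx => hasDerivAt_sigma (γ := γ) (hmem x hx).1 (hmem x hx).2)
    (fun x hx => hasDerivAt_sigmaDeriv (hmem x hx).1 (hmem x hx).2)
    ((continuousOn_sigmaDeriv2 hb₁).intervalIntegrable_of_Icc hb₀)
  have hvar := integral_abs_sigmaDeriv2_le hγ hb₀ hb₁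
  have hM : 0 ≤ γ ^ 2 * exp γ ^ 2 := by positivity
  rw [abs_of_nonneg (sigma_nonneg γ hb₀ hb₁), abs_of_nonpos (sigmaDeriv_nonpos hγ le_rfl one_pos),
    abs_of_nonpos (sigmaDeriv_nonpos hγ hb₀ hb₁), sigmaDeriv_zero] at hbound
  rw [sigmaDeriv_zero] at hvar
  refine hbound.trans ?_
  gcongr
  linarith [mul_le_of_le_one_right hM hb₁.le]

theorem antitoneOn_sigmaTilde (hγ : 0 ≤ γ) : AntitoneOn (sigmaTilde γ) (Set.Icc 0 1) := by
  intro x hx y hy hxy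
  rcases hy.2.lt_or_eq with hy₁ | rfl
  · have hx₁ : x < 1 := lt_of_le_of_lt hxy hy₁
    simp only [sigmaTilde, if_pos hy₁, if_pos hx₁, sigma]
    exact rpow_le_rpow_of_nonpos (by linarith [one_le_logWeight hx.1 hx₁])
      (logWeight_le_logWeight hxy hy₁) (by linarith)
  · rcases hx.2.lt_or_eq with hx₁ | rfl
    · simp only [sigmaTilde, if_pos hx₁, lt_irrefl, if_false]
      exact sigma_nonneg γ hx.1 hx₁
    · exact le_rfl

theorem intervalIntegrable_sigmaTilde_mul_cos (hγ : 0 ≤ γ) (θ : ℝ) {a b : ℝ}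
    (ha : a ∈ Set.Icc (0 : ℝ) 1) (hb : b ∈ Set.Icc (0 : ℝ) 1) :
    IntervalIntegrable (fun x => sigmaTilde γ x * cos (θ * x)) volume a b :=
  ((antitoneOn_sigmaTilde hγ).mono (Set.uIcc_subset_Icc ha hb)).intervalIntegrable.mul_continuousOn
    (by fun_prop)

theorem abs_integral_sigmaTilde_mul_cos_le (hγ : 0 ≤ γ) (θ : ℝ) {b : ℝ} (hb₀ : 0 ≤ b)
    (hb₁ : b < 1) :
    |∫ x in b..1, sigmaTilde γ x * cos (θ * x)| ≤ sigma γ b * (1 - b) := by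
  have h := intervalIntegral.norm_integral_le_of_norm_le_const
    (f := fun x => sigmaTilde γ x * cos (θ * x)) (C := sigma γ b) (a := b) (b := 1) ?_
  · rwa [Real.norm_eq_abs, abs_of_pos (by linarith : 0 < 1 - b)] at h
  intro x hx
  rw [Set.uIoc_of_le hb₁.le] at hx
  have hxI : x ∈ Set.Icc (0 : ℝ) 1 := ⟨by linarith [hx.1], hx.2⟩
  have hbI : b ∈ Set.Icc (0 : ℝ) 1 := ⟨hb₀, hb₁.le⟩
  have hle : sigmaTilde γ x ≤ sigmaTilde γ b := antitoneOn_sigmaTilde hγ hbI hxI hx.1.le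
  have hnn : 0 ≤ sigmaTilde γ x :=
    (antitoneOn_sigmaTilde hγ hxI ⟨zero_le_one, le_rfl⟩ hx.2).trans_eq' (by simp [sigmaTilde])
  rw [Real.norm_eq_abs, abs_mul, abs_of_nonneg hnn]
  calc sigmaTilde γ x * |cos (θ * x)| ≤ sigmaTilde γ b * 1 :=
        mul_le_mul hle (abs_cos_le_one _) (abs_nonneg _) (hnn.trans hle)
    _ = sigma γ b := by simp [sigmaTilde, hb₁]

theorem log_rpow_le (hγ : 0 < γ) {K : ℝ} (hK : 1 ≤ K) : log K ^ γ ≤ γ ^ γ * K := by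
  have hlog : log K ≤ γ * K ^ γ⁻¹ := by
    have := log_le_rpow_div (by linarith : (0 : ℝ) ≤ K) (inv_pos.mpr hγ)
    rwa [div_inv_eq_mul, mul_comm] at this
  calc log K ^ γ ≤ (γ * K ^ γ⁻¹) ^ γ := rpow_le_rpow (log_nonneg hK) hlog hγ.le
    _ = γ ^ γ * K := by
      rw [mul_rpow hγ.le (by positivity), ← rpow_mul (by linarith), inv_mul_cancel₀ hγ.ne',
        rpow_one]

theorem inv_sq_le_mul_log_rpow_neg (hγ : 0 < γ) {K : ℝ} (hK : 1 < K) :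
    (K ^ 2)⁻¹ ≤ γ ^ γ * (K⁻¹ * log K ^ (-γ)) := by
  have hlog := log_pos hK
  have hK₀ : 0 < K := by linarith
  have hL := rpow_pos_of_pos hlog γ
  rw [rpow_neg hlog.le]
  field_simp
  linarith [log_rpow_le hγ hK.le, mul_comm K (γ ^ γ)]

theorem sigma_one_sub_inv_le (hγ : 0 ≤ γ) {K : ℝ} (hK : 1 < K) :
    sigma γ (1 - K⁻¹) ≤ log K ^ (-γ) := by
  rw [sigma, logWeight_one_sub_inv]
  exact rpow_le_rpow_of_nonpos (log_pos hK) (by linarith) (by linarith)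

theorem one_sub_inv_mem_Icc {K : ℝ} (hK : 1 < K) : 1 - K⁻¹ ∈ Set.Icc (0 : ℝ) 1 :=
  ⟨by linarith [inv_lt_one_of_one_lt₀ hK], by linarith [inv_pos.mpr (zero_lt_one.trans hK)]⟩

theorem abs_integral_sigmaTilde_mul_cos_head_le (hγ : 0 < γ) {K ω : ℝ} (hK : 1 < K)
    (hω : K ≤ ω) :
    |∫ x in 0..1 - K⁻¹, sigmaTilde γ x * cos (ω * x)| ≤
      (1 + 2 * γ + 2 * (γ ^ 2 * exp γ ^ 2) * γ ^ γ) * (K⁻¹ * log K ^ (-γ)) := by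
  have hb₀ := (one_sub_inv_mem_Icc hK).1
  have hb₁ : 1 - K⁻¹ < 1 := sub_lt_self 1 (inv_pos.mpr (by linarith))
  have hlog := log_pos hK
  have hσ' : -sigmaDeriv γ (1 - K⁻¹) ≤ γ * K * log K ^ (-γ) := by
    rw [sigmaDeriv, logWeight_one_sub_inv, sub_sub_cancel, inv_inv, neg_mul, neg_mul, neg_neg]
    gcongr
    calc (1 + log K) ^ (-γ - 1) ≤ (1 + log K) ^ (-γ) :=
          rpow_le_rpow_of_exponent_le (by linarith) (by linarith)
      _ ≤ log K ^ (-γ) := rpow_le_rpow_of_nonpos hlog (by linarith) (by linarith)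
  have hcongr : ∫ x in 0..1 - K⁻¹, sigmaTilde γ x * cos (ω * x) =
      ∫ x in 0..1 - K⁻¹, sigma γ x * cos (ω * x) :=
    intervalIntegral.integral_congr fun x hx => by
      rw [Set.uIcc_of_le hb₀] at hx
      simp only [sigmaTilde, if_pos (lt_of_le_of_lt hx.2 hb₁)]
  rw [hcongr]
  calc _ ≤ sigma γ (1 - K⁻¹) / ω + 2 * (-sigmaDeriv γ (1 - K⁻¹) + γ ^ 2 * exp γ ^ 2) / ω ^ 2 :=
        abs_integral_sigma_mul_cos_le hγ.le hb₀ hb₁ (by linarith)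
    _ ≤ log K ^ (-γ) / K + 2 * (γ * K * log K ^ (-γ) + γ ^ 2 * exp γ ^ 2) / K ^ 2 := by
        have := sigma_one_sub_inv_le hγ.le hK
        gcongr
    _ = (1 + 2 * γ) * (K⁻¹ * log K ^ (-γ)) + 2 * (γ ^ 2 * exp γ ^ 2) * (K ^ 2)⁻¹ := by
        field_simp
        ring
    _ ≤ _ := by
        have := inv_sq_le_mul_log_rpow_neg hγ hK
        have : 0 ≤ 2 * (γ ^ 2 * exp γ ^ 2) := by positivity
        nlinarith

theorem abs_integral_sigmaTilde_mul_cos_tail_le (hγ : 0 ≤ γ) (θ : ℝ) {K : ℝ} (hK : 1 < K) :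
    |∫ x in 1 - K⁻¹..1, sigmaTilde γ x * cos (θ * x)| ≤ K⁻¹ * log K ^ (-γ) := by
  have hb₁ : 1 - K⁻¹ < 1 := sub_lt_self 1 (inv_pos.mpr (by linarith))
  calc _ ≤ sigma γ (1 - K⁻¹) * (1 - (1 - K⁻¹)) :=
        abs_integral_sigmaTilde_mul_cos_le hγ θ (one_sub_inv_mem_Icc hK).1 hb₁
    _ ≤ log K ^ (-γ) * K⁻¹ := by
        rw [sub_sub_cancel]
        gcongr
        exact sigma_one_sub_inv_le hγ hK
    _ = K⁻¹ * log K ^ (-γ) := mul_comm _ _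

end

end LogDecay

open LogDecay in
theorem stmt8 (γ : ℝ) (hγ : 1 < γ) :
    ∃ C : ℝ, 0 < C ∧ ∀ k : ℕ, 2 ≤ k →
      |∫ x in (0:ℝ)..1,
          (if x < 1 then (1 - Real.log (1 - x)) ^ (-γ) else 0) *
            Real.cos (π / 2 * k * x)| ≤
        C * (k : ℝ)⁻¹ * (Real.log k) ^ (-γ) := by
  have hγ₀ : 0 < γ := by linarith
  refine ⟨2 + 2 * γ + 2 * (γ ^ 2 * exp γ ^ 2) * γ ^ γ, by positivity, fun k hk => ?_⟩
  have hK : (1 : ℝ) < k := by exact_mod_cast hk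
  have hω : (k : ℝ) ≤ π / 2 * k := le_mul_of_one_le_left (by positivity) (by linarith [pi_gt_three])
  have hb := one_sub_inv_mem_Icc hK
  change |∫ x in (0 : ℝ)..1, sigmaTilde γ x * cos (π / 2 * k * x)| ≤ _
  rw [← intervalIntegral.integral_add_adjacent_intervals
    (intervalIntegrable_sigmaTilde_mul_cos hγ₀.le _ ⟨le_rfl, zero_le_one⟩ hb)
    (intervalIntegrable_sigmaTilde_mul_cos hγ₀.le _ hb ⟨zero_le_one, le_rfl⟩)]
  calc _ ≤ _ := abs_add_le _ _
    _ ≤ _ := add_le_add (abs_integral_sigmaTilde_mul_cos_head_le hγ₀ hK hω)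
        (abs_integral_sigmaTilde_mul_cos_tail_le hγ₀.le _ hK)
    _ = _ := by ring
end
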